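/- Let q ∈ ℂ be nonzero. The endomorphisms ∂, Y₁, Y₂, Y₃ of A satisfy ∂ = q·Y₁Y₂Y₃ − q²·Y₁² − q⁻²·Y₂² − q²·Y₃² + (q² + q⁻²)·id as ℂ-linear endomorphisms of A. -/

import Mathlib

noncomputable section

/-- The Laurent polynomial ring `ℂ[x^{±1}, y^{±1}, z^{±1}, w^{±1}]`, realized as the
group algebra of `ℤ⁴` over `ℂ`. -/
abbrev La : Type := AddMonoidAlgebra ℂ (Fin 4 → ℤ)

/-- The Laurent monomial with exponent vector `u`. -/
def lmono (u : Fin 4 → ℤ) : La := AddMonoidAlgebra.single u 1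

/-- The substitution `f(x,y,z,w) ↦ f(q^{e 0} x, q^{e 1} y, q^{e 2} z, q^{e 3} w)`:
the ℂ-linear map sending the monomial with exponent vector `v` to
`(∏ j, (q^{e j})^{v j})` times itself. -/
def lsubst (q : ℂ) (e : Fin 4 → ℤ) : La →ₗ[ℂ] La :=
  (Finsupp.lsum ℂ fun v => (∏ j, q ^ (e j * v j)) • (AddMonoidAlgebra.lsingle v : ℂ →ₗ[ℂ] La)) ∘ₗ
    (AddMonoidAlgebra.coeffLinearEquiv ℂ : La ≃ₗ[ℂ] ((Fin 4 → ℤ) →₀ ℂ)).toLinearMap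

/-- Multiplication by the monomial with exponent vector `u`, composed with the
substitution scaling variable `j` by `q^{e j}`. -/
def lterm (q : ℂ) (u e : Fin 4 → ℤ) : La →ₗ[ℂ] La :=
  (LinearMap.mulLeft ℂ (lmono u)).comp (lsubst q e)

lemma lsubst_single (q : ℂ) (e v : Fin 4 → ℤ) (c : ℂ) :
    lsubst q e (AddMonoidAlgebra.single v c) = (∏ j, q ^ (e j * v j)) • AddMonoidAlgebra.single v c := by
  rw [lsubst, LinearMap.comp_apply]
  erw [Finsupp.lsum_single]
  rfl

lemma lterm_single (q : ℂ) (u e v : Fin 4 → ℤ) (c : ℂ) :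
    lterm q u e (AddMonoidAlgebra.single v c) = (∏ j, q ^ (e j * v j)) • AddMonoidAlgebra.single (u + v) c := by
  rw [lterm, LinearMap.comp_apply, lsubst_single, LinearMap.mulLeft_apply, lmono, mul_smul_comm]
  congr 1
  exact (AddMonoidAlgebra.single_mul_single _ _ _ _).trans (by rw [one_mul])

lemma lterm_comp (q : ℂ) (hq : q ≠ 0) (u e u' e' : Fin 4 → ℤ) :
    lterm q u e ∘ₗ lterm q u' e' =
      (∏ j, q ^ (e j * u' j)) • lterm q (u + u') (e + e') := by
  refine AddMonoidAlgebra.lhom_ext' fun v => LinearMap.ext fun c => ?_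
  show lterm q u e ((lterm q u' e') (AddMonoidAlgebra.single v c))
      = ((∏ j, q ^ (e j * u' j)) • lterm q (u + u') (e + e')) (AddMonoidAlgebra.single v c)
  simp only [LinearMap.comp_apply, lterm_single, map_smul, LinearMap.smul_apply, smul_smul]
  rw [add_assoc]
  congr 1
  rw [← Finset.prod_mul_distrib, ← Finset.prod_mul_distrib]
  refine Finset.prod_congr rfl fun j _ => ?_
  rw [← zpow_add₀ hq, ← zpow_add₀ hq]
  congr 1
  simp [Pi.add_apply]
  ring

lemma lterm_id (q : ℂ) : lterm q ![0, 0, 0, 0] ![0, 0, 0, 0] = (LinearMap.id : La →ₗ[ℂ] La) := by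
  refine AddMonoidAlgebra.lhom_ext' fun v => LinearMap.ext fun c => ?_
  show lterm q ![0, 0, 0, 0] ![0, 0, 0, 0] (AddMonoidAlgebra.single v c) = AddMonoidAlgebra.single v c
  rw [lterm_single]
  have h0 : (![0, 0, 0, 0] : Fin 4 → ℤ) = 0 := by
    funext j; fin_cases j <;> rfl
  simp [h0]

/-- `Y₁ f = y z⁻¹ f(x, q⁻¹y, q⁻¹z, q⁻¹w) + y⁻¹ z f(x, qy, qz, qw)
  + x² z⁻¹ w⁻¹ f(x, q⁻¹y, qz, q⁻¹w) + x y⁻¹ w⁻¹ f(x, q⁻¹y, qz, qw)`. -/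
def Y1 (q : ℂ) : La →ₗ[ℂ] La :=
  lterm q ![0, 1, -1, 0] ![0, -1, -1, -1] + lterm q ![0, -1, 1, 0] ![0, 1, 1, 1] +
    lterm q ![2, 0, -1, -1] ![0, -1, 1, -1] + lterm q ![1, -1, 0, -1] ![0, -1, 1, 1]

/-- `Y₂ f = x z⁻¹ f(qx, y, qz, w) + x⁻¹ z f(q⁻¹x, y, q⁻¹z, w)
  + x⁻¹ y z⁻¹ w f(qx, y, q⁻¹z, w)`. -/
def Y2 (q : ℂ) : La →ₗ[ℂ] La :=
  lterm q ![1, 0, -1, 0] ![1, 0, 1, 0] + lterm q ![-1, 0, 1, 0] ![-1, 0, -1, 0] +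
    lterm q ![-1, 1, -1, 1] ![1, 0, -1, 0]

/-- `Y₃ f = x w⁻¹ f(q⁻¹x, q⁻¹y, z, q⁻¹w) + x⁻¹ w f(qx, qy, z, qw)
  + x⁻¹ y⁻¹ z² f(q⁻¹x, qy, z, qw) + y⁻¹ z w⁻¹ f(q⁻¹x, q⁻¹y, z, qw)`. -/
def Y3 (q : ℂ) : La →ₗ[ℂ] La :=
  lterm q ![1, 0, 0, -1] ![-1, -1, 0, -1] + lterm q ![-1, 0, 0, 1] ![1, 1, 0, 1] +
    lterm q ![-1, -1, 2, 0] ![-1, 1, 0, 1] + lterm q ![0, -1, 1, -1] ![-1, -1, 0, 1]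

/-- `∂ f = z x⁻¹ w⁻¹ f(q⁻²x, q⁻²y, q⁻²z, w) + z x⁻¹ y⁻¹ f(x, y, z, q²w)
  + w y⁻¹ f(q²x, q²y, q²z, q²w) + w z⁻¹ x⁻¹ f(q²x, y, z, q²w)
  + y w⁻¹ f(q⁻²x, q⁻²y, q⁻²z, q⁻²w) + y z⁻¹ x⁻¹ f(x, q⁻²y, q⁻²z, w)
  + x w⁻¹ z⁻¹ f(x, q⁻²y, z, w) + x y⁻¹ z⁻¹ f(q²x, y, q²z, q²w)
  + y⁻¹ w⁻¹ f(x, q⁻²y, z, q²w)`. -/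
def Dop (q : ℂ) : La →ₗ[ℂ] La :=
  lterm q ![-1, 0, 1, -1] ![-2, -2, -2, 0] + lterm q ![-1, -1, 1, 0] ![0, 0, 0, 2] +
    lterm q ![0, -1, 0, 1] ![2, 2, 2, 2] + lterm q ![-1, 0, -1, 1] ![2, 0, 0, 2] +
    lterm q ![0, 1, 0, -1] ![-2, -2, -2, -2] + lterm q ![-1, 1, -1, 0] ![0, -2, -2, 0] +
    lterm q ![1, 0, -1, -1] ![0, -2, 0, 0] + lterm q ![1, -1, -1, 0] ![2, 0, 2, 2] +
    lterm q ![0, -1, 0, -1] ![0, -2, 0, 2]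

/-- `∂ = q Y₁Y₂Y₃ − q² Y₁² − q⁻² Y₂² − q² Y₃² + (q² + q⁻²) id` as
ℂ-linear endomorphisms of `A`. -/
theorem stmt9 (q : ℂ) (hq : q ≠ 0) :
    Dop q =
      q • (Y1 q ∘ₗ Y2 q ∘ₗ Y3 q) - q ^ (2 : ℤ) • (Y1 q ∘ₗ Y1 q) -
          q ^ (-2 : ℤ) • (Y2 q ∘ₗ Y2 q) - q ^ (2 : ℤ) • (Y3 q ∘ₗ Y3 q) +
        (q ^ (2 : ℤ) + q ^ (-2 : ℤ)) • (LinearMap.id : La →ₗ[ℂ] La) := by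
  rw [← lterm_id q]
  rw [Y1, Y2, Y3, Dop]
  simp only [LinearMap.comp_add, LinearMap.add_comp, LinearMap.comp_smul, LinearMap.smul_comp,
    lterm_comp q hq, smul_smul, Fin.prod_univ_four, Matrix.cons_add_cons, Matrix.empty_add_empty,
    Matrix.cons_val_zero, Matrix.cons_val_one, Matrix.cons_val_two, Matrix.cons_val_three,
    Matrix.head_cons, Matrix.tail_cons, Int.reduceMul, Int.reduceAdd, Int.reduceNeg, ← zpow_add₀ hq]
  simp only [smul_add, smul_sub, smul_smul, add_smul, mul_assoc, ← zpow_add₀ hq, ← zpow_one_add₀ hq,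
    Int.reduceAdd, Int.reduceNeg, zpow_zero, one_smul]
  module

end
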